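/- Let γ, ρ, h₀, k_s, k_l, α_s, α_l be positive real constants and T₀ > T_∞ real constants. The function W : (0,∞) → ℝ defined by W(x) = T_∞ + (T₀ − T_∞)/(F₂(x) + 1) + γρ√(π α_s α_l)/H(x) is strictly increasing on (0,∞), with W(x) → T_∞ + (T₀ − T_∞)/(1 + h₀√(π α_l)/k_l) as x → 0⁺ and W(x) → T₀ + γρα_l/k_l as x → +∞. -/

import Mathlib

open Real Filter Set

/-- Gauss error function `erf x = (2/√π) ∫₀ˣ e^{−t²} dt`. -/
noncomputable def erf (x : ℝ) : ℝ := (2 / Real.sqrt π) * ∫ t in (0:ℝ)..x, Real.exp (-t ^ 2)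

/-- Complementary error function. -/
noncomputable def erfc (x : ℝ) : ℝ := 1 - erf x

/-- `Q(x) = √π · x · e^{x²} · erfc(x)`. -/
noncomputable def Qf (x : ℝ) : ℝ := Real.sqrt π * x * Real.exp (x ^ 2) * erfc x

/-- `F₁(x) = erfc(x) · e^{x²}`. -/
noncomputable def F1f (x : ℝ) : ℝ := erfc x * Real.exp (x ^ 2)

/-- `F₂(x) = h₀ k_s √(π α_l) e^{−x²} F₁((√α_s/√α_l)x) / (k_l(k_s + h₀√(π α_s) erf(x)))`. -/
noncomputable def F2f (h₀ ks kl αs αl : ℝ) (x : ℝ) : ℝ :=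
  h₀ * ks * Real.sqrt (π * αl) * Real.exp (-x ^ 2)
      * F1f ((Real.sqrt αs / Real.sqrt αl) * x)
    / (kl * (ks + h₀ * Real.sqrt (π * αs) * erf x))

/-- `H(x) = h₀ k_s √(π α_l)/(x e^{x²}(k_s + h₀√(π α_s) erf(x)))
           + k_l √(π α_s)/(√α_l · Q((√α_s/√α_l)x))`. -/
noncomputable def Hf (h₀ ks kl αs αl : ℝ) (x : ℝ) : ℝ :=
  h₀ * ks * Real.sqrt (π * αl)
      / (x * Real.exp (x ^ 2) * (ks + h₀ * Real.sqrt (π * αs) * erf x))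
    + kl * Real.sqrt (π * αs)
      / (Real.sqrt αl * Qf ((Real.sqrt αs / Real.sqrt αl) * x))

/-- `W(x) = T_∞ + (T₀ − T_∞)/(F₂(x) + 1) + γρ√(π α_s α_l)/H(x)`. -/
noncomputable def Wf (γ ρ h₀ ks kl αs αl T₀ Tinf : ℝ) (x : ℝ) : ℝ :=
  Tinf + (T₀ - Tinf) / (F2f h₀ ks kl αs αl x + 1)
    + γ * ρ * Real.sqrt (π * αs * αl) / Hf h₀ ks kl αs αl x


/-!
Everything rests on the classical bounds
`2x e^{-x²} / (√π (2x² + 1)) ≤ erfc x ≤ e^{-x²} / (√π x)` for `x > 0`, each obtained by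
comparing derivatives of two functions that both vanish at infinity. They give
`2x² / (2x² + 1) ≤ Q ≤ 1`, hence `F₁' = (2/√π)(Q - 1) ≤ 0` and `x Q' = Q (2x² + 1) - 2x² ≥ 0`.
So `F₂` and `H` are positive and strictly decreasing, which makes both fractions in `W` strictly
increasing. As `x → 0⁺`, `F₂` is continuous and `H → ∞`; as `x → ∞`, `F₂ → 0` and `Q → 1`.
-/

theorem le_of_hasDerivAt_le_of_tendsto_sub {f g f' g' : ℝ → ℝ} {a x : ℝ}
    (hf : ∀ y ∈ Ioi a, HasDerivAt f (f' y) y) (hg : ∀ y ∈ Ioi a, HasDerivAt g (g' y) y)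
    (hf'g' : ∀ y ∈ Ioi a, f' y ≤ g' y) (hlim : Tendsto (fun y => f y - g y) atTop (nhds 0))
    (hx : a < x) : g x ≤ f x := by
  have hanti : AntitoneOn (fun y => f y - g y) (Ioi a) := by
    refine antitoneOn_of_hasDerivWithinAt_nonpos (f' := fun y => f' y - g' y) (convex_Ioi a)
      (fun y hy => ((hf y hy).sub (hg y hy)).continuousAt.continuousWithinAt)
      (fun y hy => ?_) (fun y hy => ?_)
    · rw [interior_Ioi] at hy
      exact ((hf y hy).sub (hg y hy)).hasDerivWithinAt
    · rw [interior_Ioi] at hy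
      exact sub_nonpos.2 (hf'g' y hy)
  have hfg : 0 ≤ f x - g x :=
    le_of_tendsto hlim <| by
      filter_upwards [eventually_ge_atTop x] with y hy
      exact hanti hx (hx.trans_le hy) hy
  linarith

theorem tendsto_exp_neg_sq_atTop : Tendsto (fun x : ℝ => exp (-x ^ 2)) atTop (nhds 0) :=
  tendsto_exp_atBot.comp <| tendsto_neg_atTop_atBot.comp <| tendsto_pow_atTop two_ne_zero

theorem hasDerivAt_erf (x : ℝ) : HasDerivAt erf (2 / √π * exp (-x ^ 2)) x :=
  ((continuous_exp.comp (continuous_pow 2).neg).integral_hasStrictDerivAt 0 x).hasDerivAt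
    |>.const_mul _

theorem hasDerivAt_erfc (x : ℝ) : HasDerivAt erfc (-(2 / √π * exp (-x ^ 2))) x :=
  (hasDerivAt_erf x).const_sub 1

@[fun_prop]
theorem continuous_erf : Continuous erf :=
  continuous_iff_continuousAt.2 fun x => (hasDerivAt_erf x).continuousAt

@[fun_prop]
theorem continuous_erfc : Continuous erfc := continuous_const.sub continuous_erf

theorem erf_zero : erf 0 = 0 := by simp [erf]

theorem erf_strictMono : StrictMono erf :=
  strictMono_of_hasDerivAt_pos hasDerivAt_erf fun x => by positivity

theorem erf_nonneg {x : ℝ} (hx : 0 ≤ x) : 0 ≤ erf x :=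
  erf_zero ▸ erf_strictMono.monotone hx

theorem tendsto_erf_atTop : Tendsto erf atTop (nhds 1) := by
  have hint : MeasureTheory.IntegrableOn (fun t : ℝ => exp (-t ^ 2)) (Ioi 0) := by
    simpa using (integrable_exp_neg_mul_sq one_pos).integrableOn
  have hgauss : ∫ t in Ioi (0 : ℝ), exp (-t ^ 2) = √π / 2 := by
    simpa using integral_gaussian_Ioi 1
  have h := (MeasureTheory.intervalIntegral_tendsto_integral_Ioi 0 hint tendsto_id).const_mul
    (2 / √π)
  have hone : 2 / √π * (√π / 2) = 1 := by
    have hπ := sqrt_pos.2 pi_pos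
    field_simp
  rwa [hgauss, hone] at h

theorem tendsto_erfc_atTop : Tendsto erfc atTop (nhds 0) := by
  have h := tendsto_erf_atTop.const_sub 1
  rwa [sub_self] at h

theorem erfc_pos (x : ℝ) : 0 < erfc x := by
  have hanti : StrictAnti erfc := fun a b hab => sub_lt_sub_left (erf_strictMono hab) 1
  exact (hanti.antitone.le_of_tendsto tendsto_erfc_atTop (x + 1)).trans_lt
    (hanti (lt_add_one x))

theorem hasDerivAt_exp_neg_sq (x : ℝ) :
    HasDerivAt (fun y => exp (-y ^ 2)) (-(2 * x * exp (-x ^ 2))) x := by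
  have h : HasDerivAt (fun y => -y ^ 2) (-(2 * x)) x := by simpa using (hasDerivAt_pow 2 x).fun_neg
  convert h.exp using 1
  ring

theorem tendsto_exp_neg_sq_div_atTop :
    Tendsto (fun x => exp (-x ^ 2) / (√π * x)) atTop (nhds 0) :=
  tendsto_exp_neg_sq_atTop.div_atTop (tendsto_id.const_mul_atTop (sqrt_pos.2 pi_pos))

theorem erfc_le_exp_neg_sq_div {x : ℝ} (hx : 0 < x) : erfc x ≤ exp (-x ^ 2) / (√π * x) := by
  have hπ := sqrt_pos.2 pi_pos
  refine le_of_hasDerivAt_le_of_tendsto_sub (a := 0) (f := fun y => exp (-y ^ 2) / (√π * y))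
    (f' := fun y => -(2 / √π * exp (-y ^ 2)) - exp (-y ^ 2) / (√π * y ^ 2))
    (fun y (hy : 0 < y) => ?_) (fun y _ => hasDerivAt_erfc y)
    (fun y _ => sub_le_self _ (by positivity)) ?_ hx
  · refine ((hasDerivAt_exp_neg_sq y).fun_div ((hasDerivAt_id' y).const_mul √π)
      (by positivity)).congr_deriv ?_
    field_simp
  · simpa using tendsto_exp_neg_sq_div_atTop.sub tendsto_erfc_atTop

theorem le_erfc {x : ℝ} (hx : 0 < x) :
    2 * x * exp (-x ^ 2) / (√π * (2 * x ^ 2 + 1)) ≤ erfc x := by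
  have hπ := sqrt_pos.2 pi_pos
  refine le_of_hasDerivAt_le_of_tendsto_sub (a := 0)
    (g := fun y => 2 * y * exp (-y ^ 2) / (√π * (2 * y ^ 2 + 1)))
    (g' := fun y => -(2 / √π * exp (-y ^ 2)) + 4 * exp (-y ^ 2) / (√π * (2 * y ^ 2 + 1) ^ 2))
    (fun y _ => hasDerivAt_erfc y) (fun y _ => ?_)
    (fun y _ => le_add_of_nonneg_right (by positivity)) ?_ hx
  · have hnum := ((hasDerivAt_id' y).const_mul 2).fun_mul (hasDerivAt_exp_neg_sq y)
    have hden := (((hasDerivAt_pow 2 y).const_mul 2).add_const 1).const_mul √π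
    refine (hnum.fun_div hden (by positivity)).congr_deriv ?_
    field_simp
    ring
  · have hψ :
        Tendsto (fun y => 2 * y * exp (-y ^ 2) / (√π * (2 * y ^ 2 + 1))) atTop (nhds 0) := by
      refine squeeze_zero' ?_ ?_ tendsto_exp_neg_sq_div_atTop
      · filter_upwards [eventually_ge_atTop 0] with y hy
        positivity
      · filter_upwards [eventually_gt_atTop 0] with y hy
        rw [div_le_div_iff₀ (by positivity) (by positivity)]
        nlinarith [exp_pos (-y ^ 2)]
    simpa using tendsto_erfc_atTop.sub hψ

theorem Qf_eq_mul_F1f (x : ℝ) : Qf x = √π * x * F1f x := by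
  unfold Qf F1f
  ring

theorem hasDerivAt_F1f (x : ℝ) : HasDerivAt F1f (2 / √π * (Qf x - 1)) x := by
  refine ((hasDerivAt_erfc x).fun_mul (hasDerivAt_pow 2 x).exp).congr_deriv ?_
  have hπ := sqrt_pos.2 pi_pos
  unfold Qf
  rw [exp_neg]
  field_simp
  ring

theorem hasDerivAt_Qf (x : ℝ) : HasDerivAt Qf (√π * F1f x + 2 * x * (Qf x - 1)) x := by
  have h := ((hasDerivAt_id' x).const_mul √π).fun_mul (hasDerivAt_F1f x)
  rw [← funext Qf_eq_mul_F1f] at h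
  refine h.congr_deriv ?_
  have hπ := sqrt_pos.2 pi_pos
  field_simp

@[fun_prop]
theorem continuous_F1f : Continuous F1f :=
  continuous_iff_continuousAt.2 fun x => (hasDerivAt_F1f x).continuousAt

theorem continuous_Qf : Continuous Qf :=
  continuous_iff_continuousAt.2 fun x => (hasDerivAt_Qf x).continuousAt

theorem F1f_pos (x : ℝ) : 0 < F1f x := by
  have herfc := erfc_pos x
  unfold F1f
  positivity

theorem Qf_pos {x : ℝ} (hx : 0 < x) : 0 < Qf x := by
  have hF1 := F1f_pos x
  rw [Qf_eq_mul_F1f]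
  positivity

theorem Qf_le_one {x : ℝ} (hx : 0 < x) : Qf x ≤ 1 := by
  have hπ := sqrt_pos.2 pi_pos
  calc Qf x = √π * x * exp (x ^ 2) * erfc x := rfl
    _ ≤ √π * x * exp (x ^ 2) * (exp (-x ^ 2) / (√π * x)) := by
      gcongr
      exact erfc_le_exp_neg_sq_div hx
    _ = 1 := by
      rw [exp_neg]
      field_simp

theorem le_Qf {x : ℝ} (hx : 0 < x) : 2 * x ^ 2 / (2 * x ^ 2 + 1) ≤ Qf x := by
  have hπ := sqrt_pos.2 pi_pos
  calc 2 * x ^ 2 / (2 * x ^ 2 + 1)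
    _ = √π * x * exp (x ^ 2) * (2 * x * exp (-x ^ 2) / (√π * (2 * x ^ 2 + 1))) := by
      rw [exp_neg]
      field_simp
    _ ≤ √π * x * exp (x ^ 2) * erfc x := by
      gcongr
      exact le_erfc hx

theorem F1f_zero : F1f 0 = 1 := by simp [F1f, erfc, erf_zero]

theorem F1f_antitoneOn : AntitoneOn F1f (Ici 0) := by
  refine antitoneOn_of_hasDerivWithinAt_nonpos (convex_Ici 0) continuous_F1f.continuousOn
    (fun x _ => (hasDerivAt_F1f x).hasDerivWithinAt) fun x hx => ?_
  rw [interior_Ici] at hx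
  have hπ := sqrt_pos.2 pi_pos
  exact mul_nonpos_of_nonneg_of_nonpos (by positivity) (sub_nonpos.2 (Qf_le_one hx))

theorem F1f_le_one {x : ℝ} (hx : 0 ≤ x) : F1f x ≤ 1 :=
  F1f_zero ▸ F1f_antitoneOn self_mem_Ici hx hx

theorem Qf_monotoneOn : MonotoneOn Qf (Ici 0) := by
  refine monotoneOn_of_hasDerivWithinAt_nonneg (convex_Ici 0) continuous_Qf.continuousOn
    (fun x _ => (hasDerivAt_Qf x).hasDerivWithinAt) fun x hx => ?_
  rw [interior_Ici] at hx
  have hQ := le_Qf hx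
  rw [div_le_iff₀ (by positivity)] at hQ
  have hxQ' : x * (√π * F1f x + 2 * x * (Qf x - 1)) = Qf x * (2 * x ^ 2 + 1) - 2 * x ^ 2 := by
    rw [Qf_eq_mul_F1f]
    ring
  exact (mul_nonneg_iff_of_pos_left hx).1 (by linarith)

theorem tendsto_Qf_atTop : Tendsto Qf atTop (nhds 1) := by
  have hlow : Tendsto (fun x : ℝ => 2 * x ^ 2 / (2 * x ^ 2 + 1)) atTop (nhds 1) := by
    have hden : Tendsto (fun x : ℝ => 2 * x ^ 2 + 1) atTop atTop :=
      tendsto_atTop_add_const_right _ 1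
        ((tendsto_pow_atTop two_ne_zero).const_mul_atTop two_pos)
    have h := hden.inv_tendsto_atTop.const_sub 1
    rw [sub_zero] at h
    refine h.congr fun x => ?_
    simp only [Pi.inv_apply]
    field_simp
    ring
  exact tendsto_of_tendsto_of_tendsto_of_le_of_le' hlow tendsto_const_nhds
    (eventually_gt_atTop 0 |>.mono fun x hx => le_Qf hx)
    (eventually_gt_atTop 0 |>.mono fun x hx => Qf_le_one hx)

theorem add_mul_erf_pos {a b x : ℝ} (ha : 0 < a) (hb : 0 ≤ b) (hx : 0 ≤ x) :
    0 < a + b * erf x :=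
  add_pos_of_pos_of_nonneg ha (mul_nonneg hb (erf_nonneg hx))

section

variable {h₀ ks kl αs αl : ℝ}

theorem F2f_pos (hh₀ : 0 < h₀) (hks : 0 < ks) (hkl : 0 < kl) (hαl : 0 < αl) {x : ℝ}
    (hx : 0 ≤ x) : 0 < F2f h₀ ks kl αs αl x := by
  have hE := add_mul_erf_pos (b := h₀ * √(π * αs)) hks (by positivity) hx
  have hF1 := F1f_pos (√αs / √αl * x)
  unfold F2f
  positivity

theorem F2f_strictAntiOn (hh₀ : 0 < h₀) (hks : 0 < ks) (hkl : 0 < kl) (hαl : 0 < αl) :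
    StrictAntiOn (F2f h₀ ks kl αs αl) (Ici 0) := by
  intro a (ha : 0 ≤ a) b (hb : 0 ≤ b) hab
  have hF1 : F1f (√αs / √αl * b) ≤ F1f (√αs / √αl * a) :=
    F1f_antitoneOn (mem_Ici.2 (by positivity)) (mem_Ici.2 (by positivity)) (by gcongr)
  have hexp : exp (-b ^ 2) < exp (-a ^ 2) := exp_lt_exp.2 (by nlinarith)
  have hF1 := F1f_pos (√αs / √αl * a)
  have hE := add_mul_erf_pos (b := h₀ * √(π * αs)) hks (by positivity) ha
  unfold F2f
  refine div_lt_div₀ ?_ ?_ (by positivity) (by positivity)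
  · calc h₀ * ks * √(π * αl) * exp (-b ^ 2) * F1f (√αs / √αl * b)
        ≤ h₀ * ks * √(π * αl) * exp (-b ^ 2) * F1f (√αs / √αl * a) := by gcongr
      _ < h₀ * ks * √(π * αl) * exp (-a ^ 2) * F1f (√αs / √αl * a) := by gcongr
  · gcongr
    exact erf_strictMono.monotone hab.le

theorem Hf_pos (hh₀ : 0 < h₀) (hks : 0 < ks) (hkl : 0 < kl) (hαs : 0 < αs) (hαl : 0 < αl)
    {x : ℝ} (hx : 0 < x) : 0 < Hf h₀ ks kl αs αl x := by
  have hE := add_mul_erf_pos (b := h₀ * √(π * αs)) hks (by positivity) hx.le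
  have hQ := Qf_pos (x := √αs / √αl * x) (by positivity)
  unfold Hf
  positivity

theorem Hf_strictAntiOn (hh₀ : 0 < h₀) (hks : 0 < ks) (hkl : 0 < kl) (hαs : 0 < αs)
    (hαl : 0 < αl) : StrictAntiOn (Hf h₀ ks kl αs αl) (Ioi 0) := by
  intro a (ha : 0 < a) b (hb : 0 < b) hab
  have hE := add_mul_erf_pos (b := h₀ * √(π * αs)) hks (by positivity) ha.le
  have hQ : Qf (√αs / √αl * a) ≤ Qf (√αs / √αl * b) :=
    Qf_monotoneOn (mem_Ici.2 (by positivity)) (mem_Ici.2 (by positivity)) (by gcongr)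
  have hQa := Qf_pos (x := √αs / √αl * a) (by positivity)
  unfold Hf
  refine add_lt_add_of_lt_of_le (div_lt_div_of_pos_left (by positivity) (by positivity) ?_)
    (by gcongr)
  calc a * exp (a ^ 2) * (ks + h₀ * √(π * αs) * erf a)
      < b * exp (b ^ 2) * (ks + h₀ * √(π * αs) * erf a) := by gcongr
    _ ≤ b * exp (b ^ 2) * (ks + h₀ * √(π * αs) * erf b) := by
      gcongr
      exact erf_strictMono.monotone hab.le

theorem tendsto_F2f_nhdsGT_zero (hks : 0 < ks) (hkl : 0 < kl) :
    Tendsto (F2f h₀ ks kl αs αl) (nhdsWithin 0 (Ioi 0)) (nhds (h₀ * √(π * αl) / kl)) := by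
  have hcont : ContinuousAt (F2f h₀ ks kl αs αl) 0 := by
    unfold F2f
    refine ContinuousAt.div (by fun_prop) (by fun_prop) ?_
    simp only [erf_zero, mul_zero, add_zero]
    positivity
  have hval : F2f h₀ ks kl αs αl 0 = h₀ * √(π * αl) / kl := by
    simp only [F2f, ne_eq, OfNat.ofNat_ne_zero, not_false_eq_true, zero_pow, neg_zero, exp_zero,
      mul_one, mul_zero, F1f_zero, erf_zero, add_zero]
    field_simp
  exact hval ▸ hcont.tendsto.mono_left nhdsWithin_le_nhds

theorem tendsto_F2f_atTop (hh₀ : 0 < h₀) (hks : 0 < ks) (hkl : 0 < kl) (hαl : 0 < αl) :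
    Tendsto (F2f h₀ ks kl αs αl) atTop (nhds 0) := by
  have hbound : ∀ᶠ x in atTop,
      F2f h₀ ks kl αs αl x ≤ h₀ * ks * √(π * αl) / (kl * ks) * exp (-x ^ 2) := by
    filter_upwards [eventually_ge_atTop 0] with x hx
    have hF1 := F1f_le_one (x := √αs / √αl * x) (by positivity)
    rw [div_mul_eq_mul_div]
    unfold F2f
    refine div_le_div₀ (by positivity) ?_ (by positivity) ?_
    · exact mul_le_of_le_one_right (by positivity) hF1
    · gcongr
      exact le_add_of_nonneg_right (mul_nonneg (by positivity) (erf_nonneg hx))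
  refine squeeze_zero' ?_ hbound (by simpa using tendsto_exp_neg_sq_atTop.const_mul _)
  filter_upwards [eventually_ge_atTop 0] with x hx
  exact (F2f_pos hh₀ hks hkl hαl hx).le

theorem tendsto_Hf_nhdsGT_zero (hh₀ : 0 < h₀) (hks : 0 < ks) (hkl : 0 < kl) (hαs : 0 < αs)
    (hαl : 0 < αl) : Tendsto (Hf h₀ ks kl αs αl) (nhdsWithin 0 (Ioi 0)) atTop := by
  set d : ℝ → ℝ := fun x => x * exp (x ^ 2) * (ks + h₀ * √(π * αs) * erf x)
  have hd_pos : ∀ x > 0, 0 < d x := fun x hx => by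
    have hE := add_mul_erf_pos (b := h₀ * √(π * αs)) hks (by positivity) hx.le
    positivity
  have hd : Tendsto d (nhdsWithin 0 (Ioi 0)) (nhdsWithin 0 (Ioi 0)) := by
    refine tendsto_nhdsWithin_iff.2 ⟨?_, eventually_nhdsWithin_of_forall hd_pos⟩
    have hcont : Continuous d := by fun_prop
    simpa [d] using hcont.continuousWithinAt.tendsto (s := Ioi 0) (x := 0)
  refine tendsto_atTop_mono' _ ?_ (hd.inv_tendsto_nhdsGT_zero.const_mul_atTop
    (show 0 < h₀ * ks * √(π * αl) by positivity))
  filter_upwards [self_mem_nhdsWithin] with x (hx : 0 < x)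
  have hQ := Qf_pos (x := √αs / √αl * x) (by positivity)
  have hsecond : 0 ≤ kl * √(π * αs) / (√αl * Qf (√αs / √αl * x)) := by positivity
  simp only [Hf, Pi.inv_apply, d]
  rw [← div_eq_mul_inv]
  linarith

theorem tendsto_Hf_atTop (hh₀ : 0 < h₀) (hks : 0 < ks) (hαs : 0 < αs) (hαl : 0 < αl) :
    Tendsto (Hf h₀ ks kl αs αl) atTop (nhds (kl * √(π * αs) / √αl)) := by
  have hd :
      Tendsto (fun x => x * exp (x ^ 2) * (ks + h₀ * √(π * αs) * erf x)) atTop atTop := by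
    refine tendsto_atTop_mono' _ ?_ (tendsto_id.const_mul_atTop hks)
    filter_upwards [eventually_ge_atTop 0] with x hx
    have h1 : 1 ≤ exp (x ^ 2) := one_le_exp (by positivity)
    have h2 : ks ≤ ks + h₀ * √(π * αs) * erf x :=
      le_add_of_nonneg_right (mul_nonneg (by positivity) (erf_nonneg hx))
    calc ks * x = x * 1 * ks := by ring
      _ ≤ _ := by gcongr
  have hQ : Tendsto (fun x => Qf (√αs / √αl * x)) atTop (nhds 1) :=
    tendsto_Qf_atTop.comp (tendsto_id.const_mul_atTop (by positivity))
  have h := ((tendsto_const_nhds (x := h₀ * ks * √(π * αl))).div_atTop hd).add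
    ((tendsto_const_nhds (x := kl * √(π * αs))).div (hQ.const_mul √αl) (by positivity))
  simp only [mul_one, zero_add] at h
  exact h


variable {γ ρ T₀ Tinf : ℝ}

theorem Wf_strictMonoOn (hγ : 0 < γ) (hρ : 0 < ρ) (hh₀ : 0 < h₀) (hks : 0 < ks)
    (hkl : 0 < kl) (hαs : 0 < αs) (hαl : 0 < αl) (hT : Tinf < T₀) :
    StrictMonoOn (Wf γ ρ h₀ ks kl αs αl T₀ Tinf) (Ioi 0) := by
  intro a (ha : 0 < a) b (hb : 0 < b) hab
  have hF2 :=
    F2f_strictAntiOn (αs := αs) hh₀ hks hkl hαl (mem_Ici.2 ha.le) (mem_Ici.2 hb.le) hab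
  have hF2b := F2f_pos (αs := αs) hh₀ hks hkl hαl hb.le
  have hA : (T₀ - Tinf) / (F2f h₀ ks kl αs αl a + 1)
      < (T₀ - Tinf) / (F2f h₀ ks kl αs αl b + 1) :=
    div_lt_div_of_pos_left (by linarith) (by linarith) (by linarith)
  have hB : γ * ρ * √(π * αs * αl) / Hf h₀ ks kl αs αl a
      < γ * ρ * √(π * αs * αl) / Hf h₀ ks kl αs αl b :=
    div_lt_div_of_pos_left (by positivity) (Hf_pos hh₀ hks hkl hαs hαl hb)
      (Hf_strictAntiOn hh₀ hks hkl hαs hαl ha hb hab)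
  simp only [Wf]
  linarith

theorem tendsto_Wf_nhdsGT_zero (hh₀ : 0 < h₀) (hks : 0 < ks) (hkl : 0 < kl) (hαs : 0 < αs)
    (hαl : 0 < αl) :
    Tendsto (Wf γ ρ h₀ ks kl αs αl T₀ Tinf) (nhdsWithin 0 (Ioi 0))
      (nhds (Tinf + (T₀ - Tinf) / (1 + h₀ * √(π * αl) / kl))) := by
  have hA := (tendsto_const_nhds (x := T₀ - Tinf)).div
    ((tendsto_F2f_nhdsGT_zero (h₀ := h₀) (αs := αs) (αl := αl) hks hkl).add_const 1)
    (by positivity)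
  have hB := (tendsto_const_nhds (x := γ * ρ * √(π * αs * αl))).div_atTop
    (tendsto_Hf_nhdsGT_zero hh₀ hks hkl hαs hαl)
  have h := (hA.const_add Tinf).add hB
  rwa [add_zero, add_comm (h₀ * _ / kl)] at h

theorem tendsto_Wf_atTop (hh₀ : 0 < h₀) (hks : 0 < ks) (hkl : 0 < kl) (hαs : 0 < αs)
    (hαl : 0 < αl) :
    Tendsto (Wf γ ρ h₀ ks kl αs αl T₀ Tinf) atTop (nhds (T₀ + γ * ρ * αl / kl)) := by
  have hA := (tendsto_const_nhds (x := T₀ - Tinf)).div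
    ((tendsto_F2f_atTop (αs := αs) hh₀ hks hkl hαl).add_const 1) (by norm_num)
  have hB := (tendsto_const_nhds (x := γ * ρ * √(π * αs * αl))).div
    (tendsto_Hf_atTop (kl := kl) hh₀ hks hαs hαl) (by positivity)
  have hval :
      γ * ρ * √(π * αs * αl) / (kl * √(π * αs) / √αl) = γ * ρ * αl / kl := by
    rw [sqrt_mul (by positivity)]
    field_simp
    rw [sq_sqrt hαl.le]
  have h := (hA.const_add Tinf).add hB
  rw [hval, zero_add, div_one, add_sub_cancel] at h
  exact h

end

/-- `W` is strictly increasing on `(0,∞)`, with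
`W(x) → T_∞ + (T₀ − T_∞)/(1 + h₀√(π α_l)/k_l)` as `x → 0⁺` and
`W(x) → T₀ + γρα_l/k_l` as `x → +∞`. -/
theorem Wf_strictMonoOn_limits (γ ρ h₀ ks kl αs αl T₀ Tinf : ℝ)
    (hγ : 0 < γ) (hρ : 0 < ρ) (hh₀ : 0 < h₀) (hks : 0 < ks) (hkl : 0 < kl)
    (hαs : 0 < αs) (hαl : 0 < αl) (hT : Tinf < T₀) :
    StrictMonoOn (Wf γ ρ h₀ ks kl αs αl T₀ Tinf) (Set.Ioi (0 : ℝ)) ∧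
    Tendsto (Wf γ ρ h₀ ks kl αs αl T₀ Tinf) (nhdsWithin 0 (Set.Ioi 0))
      (nhds (Tinf + (T₀ - Tinf) / (1 + h₀ * Real.sqrt (π * αl) / kl))) ∧
    Tendsto (Wf γ ρ h₀ ks kl αs αl T₀ Tinf) atTop
      (nhds (T₀ + γ * ρ * αl / kl)) :=
  ⟨Wf_strictMonoOn hγ hρ hh₀ hks hkl hαs hαl hT,
    tendsto_Wf_nhdsGT_zero hh₀ hks hkl hαs hαl,
    tendsto_Wf_atTop hh₀ hks hkl hαs hαl⟩
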